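/- arXiv:1805.10040 — 2 statements merged into one kernel-verified Lean document; each statement's English description precedes it below -/
import Mathlib

section
/- For the weight function w(t) = 1/(1-t) (stress parameter b = 1), the weighted mean square error equals n/2 - Σ_{i=1}^n [2 F(x_{(i)}) + ((2(n-i)+1)/n) ln(1 - F(x_{(i)}))], where x_{(1)} ≤ ... ≤ x_{(n)} are the order statistics. -/
/-!
Pushing `F.measure` forward along the continuous distribution function `F` gives Lebesgue
measure on `(0, 1)`, and off the null level sets `{F = F (x i)}` one has
`x i ≤ t ↔ F (x i) < F t`. So the statistic is `n ∫₀¹ (G u / n - u) ^ 2 / (1 - u) du` with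
`G u = #{i | F (x i) < u}`, which equals `k` between consecutive breakpoints
`0 ≤ F (x 0) ≤ ⋯ ≤ F (x (n - 1)) < 1`. There the integrand has the antiderivative
`tailAntideriv (k / n)`, and summing over the pieces telescopes: what is left are the boundary
values `-1/2` at `0` and `0` at `1`, and the jumps of the antiderivative at each `F (x i)` as `k`
increases by one, which are the summands of the formula.
-/

open MeasureTheory Filter Set Topology
open scoped Finset

theorem Monotone.exists_preimage_Iic_eq_Iic {α β : Type*} [ConditionallyCompleteLinearOrder α]
    [TopologicalSpace α] [OrderTopology α] [DenselyOrdered α] [LinearOrder β] [TopologicalSpace β]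
    [OrderClosedTopology β] {f : α → β} (hf : Monotone f) (hcont : Continuous f) {a : β}
    (hne : (f ⁻¹' Iic a).Nonempty) {t : α} (ht : a < f t) :
    ∃ b, f b = a ∧ f ⁻¹' Iic a = Iic b := by
  have hbdd : BddAbove (f ⁻¹' Iic a) :=
    ⟨t, fun s hs => le_of_not_gt fun hts => (ht.trans_le (hf hts.le)).not_ge hs⟩
  set b := sSup (f ⁻¹' Iic a)
  have hb : f b ≤ a := (isClosed_Iic.preimage hcont).csSup_mem hne hbdd
  have hbt : b ≤ t := le_of_not_gt fun htb => (ht.trans_le (hf htb.le)).not_ge hb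
  obtain ⟨c, -, hc⟩ := intermediate_value_Icc hbt hcont.continuousOn ⟨hb, ht.le⟩
  have hcb : c ≤ b := le_csSup hbdd hc.le
  refine ⟨b, le_antisymm hb (hc ▸ hf hcb), ?_⟩
  exact Subset.antisymm (fun _ => le_csSup hbdd) fun _ hs => (hf hs).trans hb

namespace StieltjesFunction

theorem measure_preimage_Iic_of_continuous (F : StieltjesFunction ℝ) (hFcont : Continuous F)
    (hF0 : Tendsto F atBot (𝓝 0)) (hF1 : Tendsto F atTop (𝓝 1)) (a : ℝ) :
    F.measure (F ⁻¹' Iic a) = volume (Iic a ∩ Ioo 0 1) := by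
  have hF_nonneg (t : ℝ) : 0 ≤ F t :=
    le_of_tendsto hF0 (eventually_atBot.2 ⟨t, fun _ hs => F.mono hs⟩)
  rcases (F ⁻¹' Iic a).eq_empty_or_nonempty with hempty | hne
  · have ha : a ≤ 0 := le_of_not_gt fun ha =>
      let ⟨t, ht⟩ := (hF0.eventually (eventually_lt_nhds ha)).exists
      hempty.subset ht.le
    have hI : Iic a ∩ Ioo 0 1 = ∅ := eq_empty_of_forall_notMem fun s hs => by
      simp only [mem_inter_iff, mem_Iic, mem_Ioo] at hs; linarith
    rw [hempty, measure_empty, hI, measure_empty]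
  by_cases htop : ∃ t, a < F t
  · obtain ⟨t, ht⟩ := htop
    obtain ⟨b, hba, hpre⟩ := F.mono.exists_preimage_Iic_eq_Iic hFcont hne ht
    have ha1 : a < 1 :=
      ht.trans_le (ge_of_tendsto hF1 (eventually_atTop.2 ⟨t, fun _ hs => F.mono hs⟩))
    have ha0 : 0 ≤ a := hba ▸ hF_nonneg b
    have hI : Iic a ∩ Ioo 0 1 = Ioc 0 a := by
      ext s; simp only [mem_inter_iff, mem_Iic, mem_Ioo, mem_Ioc]; grind
    rw [hpre, F.measure_Iic hF0, hba, hI, Real.volume_Ioc, sub_zero]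
  · push Not at htop
    have ha1 : 1 ≤ a := le_of_tendsto' hF1 htop
    have hpre : F ⁻¹' Iic a = univ := eq_univ_of_forall htop
    rw [hpre, F.measure_univ hF0 hF1,
      inter_eq_right.2 fun s hs => hs.2.le.trans ha1, Real.volume_Ioo]

theorem map_measure_of_continuous (F : StieltjesFunction ℝ) (hFcont : Continuous F)
    (hF0 : Tendsto F atBot (𝓝 0)) (hF1 : Tendsto F atTop (𝓝 1)) :
    F.measure.map F = volume.restrict (Ioo 0 1) := by
  have := F.isProbabilityMeasure hF0 hF1
  have := Measure.isProbabilityMeasure_map (μ := F.measure) hFcont.aemeasurable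
  refine Measure.ext_of_Iic _ _ fun a => ?_
  rw [Measure.map_apply hFcont.measurable measurableSet_Iic,
    Measure.restrict_apply' measurableSet_Ioo, measure_preimage_Iic_of_continuous F hFcont hF0 hF1]

theorem measure_preimage_singleton_of_continuous (F : StieltjesFunction ℝ)
    (hFcont : Continuous F) (hF0 : Tendsto F atBot (𝓝 0)) (hF1 : Tendsto F atTop (𝓝 1)) (c : ℝ) :
    F.measure (F ⁻¹' {c}) = 0 := by
  rw [← Measure.map_apply hFcont.measurable (measurableSet_singleton c),
    map_measure_of_continuous F hFcont hF0 hF1, Measure.restrict_apply' measurableSet_Ioo]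
  exact measure_mono_null inter_subset_left Real.volume_singleton

theorem integral_comp_of_continuous {E : Type*} [NormedAddCommGroup E] [NormedSpace ℝ E]
    (F : StieltjesFunction ℝ) (hFcont : Continuous F)
    (hF0 : Tendsto F atBot (𝓝 0)) (hF1 : Tendsto F atTop (𝓝 1)) {g : ℝ → E}
    (hg : AEStronglyMeasurable g (volume.restrict (Ioo 0 1))) :
    ∫ t, g (F t) ∂F.measure = ∫ u in Ioo 0 1, g u := by
  rw [← map_measure_of_continuous F hFcont hF0 hF1] at hg ⊢
  exact (integral_map hFcont.aemeasurable hg).symm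

theorem ae_card_le_eq_card_lt (F : StieltjesFunction ℝ) (hFcont : Continuous F)
    (hF0 : Tendsto F atBot (𝓝 0)) (hF1 : Tendsto F atTop (𝓝 1)) {ι : Type*} [Fintype ι]
    (x : ι → ℝ) : ∀ᵐ t ∂F.measure, #{i | x i ≤ t} = #{i | F (x i) < F t} := by
  have hlevel : ∀ᵐ t ∂F.measure, ∀ i, F t ≠ F (x i) :=
    ae_all_iff.2 fun i => measure_eq_zero_iff_ae_notMem.1
      (measure_preimage_singleton_of_continuous F hFcont hF0 hF1 (F (x i)))
  filter_upwards [hlevel] with t ht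
  congr 1
  exact Finset.filter_congr fun i _ =>
    ⟨fun hi => (F.mono hi).lt_of_ne (ht i).symm, fun hi => (F.mono.reflect_lt hi).le⟩

end StieltjesFunction

theorem intervalIntegral.integral_eq_sum_sub_of_hasDerivAt_of_nonneg {w : ℕ → ℝ}
    (hw : Monotone w) {f : ℝ → ℝ} {H : ℕ → ℝ → ℝ} {m : ℕ}
    (hcont : ∀ k < m, ContinuousOn (H k) (Icc (w k) (w (k + 1))))
    (hderiv : ∀ k < m, ∀ u ∈ Ioo (w k) (w (k + 1)), HasDerivAt (H k) (f u) u)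
    (hf : ∀ k < m, ∀ u ∈ Ioo (w k) (w (k + 1)), 0 ≤ f u) :
    ∫ u in w 0..w m, f u = ∑ k ∈ Finset.range m, (H k (w (k + 1)) - H k (w k)) := by
  have hpiece : ∀ k < m, IntervalIntegrable f volume (w k) (w (k + 1)) ∧
      ∫ u in w k..w (k + 1), f u = H k (w (k + 1)) - H k (w k) := by
    intro k hk
    have hle := hw k.le_succ
    have hint : IntervalIntegrable f volume (w k) (w (k + 1)) :=
      (intervalIntegrable_iff_integrableOn_Ioc_of_le hle).2
        (integrableOn_deriv_of_nonneg (hcont k hk) (hderiv k hk) (hf k hk))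
    exact ⟨hint, integral_eq_sub_of_hasDerivAt_of_le hle (hcont k hk) (hderiv k hk) hint⟩
  rw [← sum_integral_adjacent_intervals fun k hk => (hpiece k hk).1]
  exact Finset.sum_congr rfl fun k hk => (hpiece k (Finset.mem_range.1 hk)).2

theorem Finset.sum_range_succ_sub_telescope {M : Type*} [AddCommGroup M] (H : ℕ → ℕ → M)
    (m : ℕ) : ∑ k ∈ range (m + 1), (H k (k + 1) - H k k) =
      H m (m + 1) - H 0 0 + ∑ k ∈ range m, (H k (k + 1) - H (k + 1) (k + 1)) := by
  induction m with
  | zero => simp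
  | succ m ih => rw [sum_range_succ, ih, sum_range_succ]; abel

noncomputable def tailAntideriv (a u : ℝ) : ℝ :=
  -(1 - u) ^ 2 / 2 - 2 * (1 - a) * u - (1 - a) ^ 2 * Real.log (1 - u)

theorem hasDerivAt_tailAntideriv (a : ℝ) {u : ℝ} (hu : u ≠ 1) :
    HasDerivAt (tailAntideriv a) ((a - u) ^ 2 / (1 - u)) u := by
  have h1u : 1 - u ≠ 0 := sub_ne_zero.2 hu.symm
  have hlog : HasDerivAt (fun u => Real.log (1 - u)) (-1 / (1 - u)) u := by
    simpa [div_eq_inv_mul] using ((hasDerivAt_id u).const_sub 1).log h1u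
  unfold tailAntideriv
  refine (((((hasDerivAt_id u).const_sub 1).pow 2).neg.div_const 2).sub
    ((hasDerivAt_id u).const_mul (2 * (1 - a))) |>.sub
      (hlog.const_mul ((1 - a) ^ 2))).congr_deriv ?_
  simp only [id]
  field_simp
  ring

theorem continuousOn_tailAntideriv (a : ℝ) : ContinuousOn (tailAntideriv a) (Iio 1) := by
  unfold tailAntideriv
  refine (by fun_prop : ContinuousOn _ _).sub
    (continuousOn_const.mul (ContinuousOn.log (by fun_prop) fun u hu => ?_))
  exact sub_ne_zero.2 (ne_of_gt hu)

theorem continuous_tailAntideriv_one : Continuous (tailAntideriv 1) := by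
  have h : tailAntideriv 1 = fun u => -(1 - u) ^ 2 / 2 := by
    funext u; simp [tailAntideriv]
  rw [h]
  fun_prop

section Breakpoints

variable {n : ℕ}

def breakpoints (y : Fin n → ℝ) : ℕ → ℝ
  | 0 => 0
  | k + 1 => if h : k < n then y ⟨k, h⟩ else 1

theorem breakpoints_succ_of_lt (y : Fin n → ℝ) {k : ℕ} (hk : k < n) :
    breakpoints y (k + 1) = y ⟨k, hk⟩ :=
  dif_pos hk

theorem breakpoints_succ_of_le (y : Fin n → ℝ) {k : ℕ} (hk : n ≤ k) :
    breakpoints y (k + 1) = 1 :=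
  dif_neg hk.not_gt

theorem monotone_breakpoints {y : Fin n → ℝ} (hy : Monotone y) (hy0 : ∀ i, 0 ≤ y i)
    (hy1 : ∀ i, y i ≤ 1) : Monotone (breakpoints y) := by
  refine monotone_nat_of_le_succ fun k => ?_
  rcases k with _ | k
  · show 0 ≤ breakpoints y 1
    rcases Nat.eq_zero_or_pos n with rfl | hn
    · simp [breakpoints_succ_of_le]
    · rw [breakpoints_succ_of_lt y hn]; exact hy0 _
  · simp only [breakpoints]
    split_ifs with h₁ h₂ h₂
    · exact hy (Fin.mk_le_mk.2 k.le_succ)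
    · exact hy1 _
    · omega
    · rfl

theorem card_lt_eq_of_mem_Ioo_breakpoints {y : Fin n → ℝ} (hy : Monotone y) {k : ℕ}
    (hk : k ≤ n) {u : ℝ} (hu : u ∈ Ioo (breakpoints y k) (breakpoints y (k + 1))) :
    #{j | y j < u} = k := by
  suffices h : ∀ j : Fin n, y j < u ↔ (j : ℕ) < k by
    simp_rw [h, Fin.card_filter_val_lt, min_eq_right hk]
  intro j
  constructor
  · intro hj
    by_contra! hkj
    have hkn : k < n := hkj.trans_lt j.is_lt
    rw [breakpoints_succ_of_lt y hkn] at hu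
    exact (hu.2.trans_le (hy (Fin.mk_le_mk.2 hkj))).not_gt hj
  · intro hj
    obtain ⟨k, rfl⟩ := Nat.exists_eq_add_one_of_ne_zero (Nat.ne_zero_of_lt hj)
    rw [breakpoints_succ_of_lt y (by omega)] at hu
    exact (hy (Fin.mk_le_mk.2 (Nat.lt_succ_iff.1 hj))).trans_lt hu.1

theorem integral_Ioo_eq_sum_sub_tailAntideriv (hn : n ≠ 0) {y : Fin n → ℝ} (hy : Monotone y)
    (hy0 : ∀ i, 0 ≤ y i) (hy1 : ∀ i, y i < 1) :
    ∫ u in Ioo 0 1, ((#{j | y j < u} : ℝ) / n - u) ^ 2 / (1 - u) =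
      ∑ k ∈ Finset.range (n + 1), (tailAntideriv (k / n) (breakpoints y (k + 1)) -
        tailAntideriv (k / n) (breakpoints y k)) := by
  set w := breakpoints y
  have hw : Monotone w := monotone_breakpoints hy hy0 fun i => (hy1 i).le
  have hw_last : w (n + 1) = 1 := breakpoints_succ_of_le y le_rfl
  have hlt_one : ∀ k < n + 1, ∀ u ∈ Ioo (w k) (w (k + 1)), u < 1 := fun k hk u hu =>
    hu.2.trans_le (hw_last ▸ hw (by omega))
  have hIoc : Ioc (0 : ℝ) 1 = Ioc (w 0) (w (n + 1)) := by rw [hw_last]; rfl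
  rw [← integral_Ioc_eq_integral_Ioo, hIoc,
    ← intervalIntegral.integral_of_le (hw n.succ.zero_le)]
  refine intervalIntegral.integral_eq_sum_sub_of_hasDerivAt_of_nonneg hw
    (fun k hk => ?_) (fun k hk u hu => ?_) fun k hk u hu => ?_
  · rcases (Nat.lt_succ_iff.1 hk).lt_or_eq with hk | rfl
    · refine (continuousOn_tailAntideriv _).mono fun u hu => hu.2.trans_lt ?_
      exact (breakpoints_succ_of_lt y hk).trans_lt (hy1 _)
    · rw [div_self (Nat.cast_ne_zero.2 hn)]
      exact continuous_tailAntideriv_one.continuousOn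
  · rw [card_lt_eq_of_mem_Ioo_breakpoints hy (Nat.lt_succ_iff.1 hk) hu]
    exact hasDerivAt_tailAntideriv _ (hlt_one k hk u hu).ne
  · have := sub_pos.2 (hlt_one k hk u hu)
    positivity

theorem tailAntideriv_sub_tailAntideriv_succ (hn : n ≠ 0) (k : ℕ) (v : ℝ) :
    tailAntideriv (k / n) v - tailAntideriv ((k + 1 : ℕ) / n) v =
      -(2 * v + ((2 * ((n : ℝ) - (k + 1)) + 1) / n) * Real.log (1 - v)) / n := by
  simp only [tailAntideriv]
  field_simp
  push_cast
  ring

theorem integral_Ioo_sq_card_lt_div_sub (hn : n ≠ 0) {y : Fin n → ℝ} (hy : Monotone y)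
    (hy0 : ∀ i, 0 ≤ y i) (hy1 : ∀ i, y i < 1) :
    ∫ u in Ioo 0 1, ((#{j | y j < u} : ℝ) / n - u) ^ 2 / (1 - u) =
      1 / 2 - (∑ i : Fin n,
        (2 * y i + ((2 * ((n : ℝ) - ((i : ℕ) + 1)) + 1) / n) * Real.log (1 - y i))) / n := by
  have hjump (i : Fin n) :
      tailAntideriv ((i : ℕ) / n) (breakpoints y (i + 1)) -
          tailAntideriv (((i : ℕ) + 1 : ℕ) / n) (breakpoints y (i + 1)) =
        -(2 * y i + ((2 * ((n : ℝ) - ((i : ℕ) + 1)) + 1) / n) * Real.log (1 - y i)) / n := by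
    rw [breakpoints_succ_of_lt y i.is_lt, tailAntideriv_sub_tailAntideriv_succ hn]
  rw [integral_Ioo_eq_sum_sub_tailAntideriv hn hy hy0 hy1,
    Finset.sum_range_succ_sub_telescope (fun k l => tailAntideriv (k / n) (breakpoints y l)),
    ← Fin.sum_univ_eq_sum_range (fun k => tailAntideriv (k / n) (breakpoints y (k + 1)) -
      tailAntideriv ((k + 1 : ℕ) / n) (breakpoints y (k + 1))),
    Finset.sum_congr rfl fun i _ => hjump i, div_self (Nat.cast_ne_zero.2 hn),
    breakpoints_succ_of_le y le_rfl, ← Finset.sum_div, Finset.sum_neg_distrib,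
    Nat.cast_zero, zero_div, show breakpoints y 0 = 0 from rfl]
  have h_one : tailAntideriv 1 1 = 0 := by simp [tailAntideriv]
  have h_zero : tailAntideriv 0 0 = -1 / 2 := by norm_num [tailAntideriv]
  rw [h_one, h_zero]
  ring

end Breakpoints

theorem measurable_card_filter_lt {ι : Type*} [Fintype ι] (y : ι → ℝ) :
    Measurable fun u : ℝ => (#{i | y i < u} : ℝ) := by
  refine Monotone.measurable fun a b hab => ?_
  exact Nat.cast_le.2
    (Finset.card_le_card (Finset.monotone_filter_right _ fun _ _ hi => hi.trans_le hab))

theorem upper_tail_statistic_b_one_general (n : ℕ) (F : StieltjesFunction ℝ)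
    (hFcont : Continuous F) (hF0 : Tendsto F atBot (nhds 0))
    (hF1 : Tendsto F atTop (nhds 1))
    (x : Fin n → ℝ) (hx : Monotone x)
    (hFx : ∀ i, F (x i) ∈ Set.Ico (0 : ℝ) 1) :
    (n : ℝ) *
      ∫ t, (((Finset.univ.filter fun i : Fin n => x i ≤ t).card : ℝ) / n - F t) ^ 2
          / (1 - F t) ∂F.measure
      = (n : ℝ) / 2 -
        ∑ i : Fin n,
          (2 * F (x i) +
            ((2 * ((n : ℝ) - ((i : ℕ) + 1)) + 1) / n) * Real.log (1 - F (x i))) := by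
  rcases Nat.eq_zero_or_pos n with rfl | hn
  · simp
  set g : ℝ → ℝ := fun u => ((#{i | F (x i) < u} : ℝ) / n - u) ^ 2 / (1 - u)
  have hg : Measurable g := by
    have := measurable_card_filter_lt fun i => F (x i)
    fun_prop
  have hsubst : ∫ t, ((#{i | x i ≤ t} : ℝ) / n - F t) ^ 2 / (1 - F t) ∂F.measure =
      ∫ t, g (F t) ∂F.measure :=
    integral_congr_ae ((F.ae_card_le_eq_card_lt hFcont hF0 hF1 x).mono fun t ht => by
      simp only [g, ht])
  rw [hsubst, F.integral_comp_of_continuous hFcont hF0 hF1 hg.aestronglyMeasurable]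
  simp only [g]
  rw [integral_Ioo_sq_card_lt_div_sub (y := fun i => F (x i)) hn.ne' (F.mono.comp hx)
    (fun i => (hFx i).1) fun i => (hFx i).2]
  field_simp

/-- Upper-tail computation formula for stress parameter `b = 1` (weight `w(t)=1/(1-t)`):
the weighted mean square error equals
`n/2 - ∑ [2 F(x₍ᵢ₎) + ((2(n-i)+1)/n) ln(1 - F(x₍ᵢ₎))]`. -/
theorem upper_tail_statistic_b_one (n : ℕ) (hn : 0 < n) (F : StieltjesFunction ℝ)
    (hFcont : Continuous F) (hF0 : Tendsto F atBot (nhds 0))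
    (hF1 : Tendsto F atTop (nhds 1))
    (x : Fin n → ℝ) (hx : Monotone x)
    (hFx : ∀ i, F (x i) ∈ Set.Ico (0 : ℝ) 1) :
    (n : ℝ) *
      ∫ t, (((Finset.univ.filter fun i : Fin n => x i ≤ t).card : ℝ) / n - F t) ^ 2
          / (1 - F t) ∂F.measure
      = (n : ℝ) / 2 -
        ∑ i : Fin n,
          (2 * F (x i) +
            ((2 * ((n : ℝ) - ((i : ℕ) + 1)) + 1) / n) * Real.log (1 - F (x i))) :=
  upper_tail_statistic_b_one_general n F hFcont hF0 hF1 x hx hFx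
end

section
/- For a = 1, the expected value of the lower-tail weighted mean square error equals 1/2: E[ -3n/2 + Σ_{i=1}^n (2 U_{(i)} - ((2i-1)/n) ln U_{(i)}) ] = 1/2, where U_{(1)} ≤ ... ≤ U_{(n)} are the order statistics of n i.i.d. uniform random variables on [0,1]. -/
/-!
Almost surely the coordinates `ω j` are distinct, and then the `i`-th order statistic is the
coordinate of rank `i`. Reindexing by the sorting permutation turns the weight `(2i+1)/n` of
`log U₍ᵢ₎` into the weight `(2 #{k | ω k < ω j} + 1)/n` of `log (ω j)`, so the integrand becomes a
sum of functions of single coordinates and of pairs of distinct coordinates. Under the uniform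
product measure these have expectations `E[U] = 1/2`, `E[log U] = -1` and
`E[1{V < U} log U] = ∫₀¹ u log u du = -1/4`, and
`-3n/2 + n (1 + 1/n) + (2/n) n (n-1)/4 = 1/2`.
-/

open MeasureTheory ProbabilityTheory Finset Set Real

namespace Tuple

variable {n : ℕ} {α : Type*} [LinearOrder α] {ω : Fin n → α}

theorem card_lt_apply_sort (hω : Function.Injective ω) (i : Fin n) :
    #{k | ω k < ω (sort ω i)} = i := by
  have hmono : StrictMono (ω ∘ sort ω) :=
    (monotone_sort ω).strictMono_of_injective (hω.comp (sort ω).injective)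
  calc #{k | ω k < ω (sort ω i)}
      = #{m | ω (sort ω m) < ω (sort ω i)} := card_equiv (sort ω).symm (by simp)
    _ = #(Iio i) := congrArg card (by ext m; simpa using hmono.lt_iff_lt)
    _ = i := Fin.card_Iio i

theorem sum_apply_sort_eq_sum_rank {M : Type*} [AddCommMonoid M] (hω : Function.Injective ω)
    (f : ℕ → α → M) :
    ∑ i : Fin n, f i (ω (sort ω i)) = ∑ j, f #{k | ω k < ω j} (ω j) := by
  rw [← Equiv.sum_comp (sort ω) (fun j => f #{k | ω k < ω j} (ω j))]
  simp only [card_lt_apply_sort hω]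

end Tuple

theorem Finset.sum_sum_comp_eq_sum_sum_erase {ι α M : Type*} [Fintype ι] [DecidableEq ι]
    [AddCommMonoid M] {f : α × α → M} (hf : ∀ x, f (x, x) = 0) (ω : ι → α) :
    ∑ j, ∑ k, f (ω j, ω k) = ∑ j, ∑ k ∈ univ.erase j, f (ω j, ω k) :=
  sum_congr rfl fun j _ => (sum_erase (f := fun k => f (ω j, ω k)) univ (hf (ω j))).symm

namespace MeasureTheory

theorem measurePreserving_eval_prodMk_eval {ι : Type*} [Fintype ι] {X : ι → Type*}
    [∀ i, MeasurableSpace (X i)] {μ : ∀ i, Measure (X i)} [∀ i, IsProbabilityMeasure (μ i)]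
    {j k : ι} (hjk : j ≠ k) :
    MeasurePreserving (fun ω : ∀ i, X i => (ω j, ω k)) (Measure.pi μ) ((μ j).prod (μ k)) := by
  have hindep : IndepFun (fun ω : ∀ i, X i => ω j) (fun ω => ω k) (Measure.pi μ) :=
    (iIndepFun_pi (X := fun _ => id) fun _ => aemeasurable_id).indepFun hjk
  refine ⟨by fun_prop, ?_⟩
  rw [(indepFun_iff_map_prod_eq_prod_map_map (measurable_pi_apply j).aemeasurable
      (measurable_pi_apply k).aemeasurable).1 hindep,
    (measurePreserving_eval μ j).map_eq, (measurePreserving_eval μ k).map_eq]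

section IIDCoordinates

variable {ι : Type*} [Fintype ι] {α : Type*} [MeasurableSpace α] {μ : Measure α}
  [IsProbabilityMeasure μ] {E : Type*} [NormedAddCommGroup E]

theorem ae_injective_pi [MeasurableEq α] [NullSingletonClass μ] :
    ∀ᵐ ω ∂(Measure.pi fun _ : ι => μ), Function.Injective ω := by
  have hoff : ∀ᵐ p ∂(μ.prod μ), p ∈ (diagonal α)ᶜ :=
    (Measure.ae_prod_mem_iff_ae_ae_mem measurableSet_diagonal.compl).2
      (ae_of_all _ fun x => (μ.ae_ne x).mono fun _ hy => Ne.symm hy)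
  refine ae_all_iff.2 fun j => ae_all_iff.2 fun k => ?_
  rcases eq_or_ne j k with rfl | hjk
  · exact ae_of_all _ fun _ _ => rfl
  · filter_upwards [(measurePreserving_eval_prodMk_eval hjk).quasiMeasurePreserving.tendsto_ae
      |>.eventually hoff] with ω hω heq using absurd heq hω

theorem integrable_sum_comp_eval {f : α → E} (hf : Integrable f μ) :
    Integrable (fun ω => ∑ j, f (ω j)) (Measure.pi fun _ : ι => μ) :=
  integrable_finsetSum _ fun _ _ => integrable_comp_eval hf

theorem integral_sum_comp_eval [NormedSpace ℝ E] {f : α → E} (hf : Integrable f μ) :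
    ∫ ω, ∑ j, f (ω j) ∂(Measure.pi fun _ : ι => μ) = Fintype.card ι • ∫ x, f x ∂μ := by
  rw [integral_finsetSum _ fun _ _ => integrable_comp_eval hf,
    sum_congr rfl fun j _ => integral_comp_eval (μ := fun _ => μ) (i := j) hf.aestronglyMeasurable]
  simp

theorem integrable_comp_eval_prodMk_eval {f : α × α → E} (hf : Integrable f (μ.prod μ))
    {j k : ι} (hjk : j ≠ k) :
    Integrable (fun ω => f (ω j, ω k)) (Measure.pi fun _ : ι => μ) :=
  (measurePreserving_eval_prodMk_eval hjk).integrable_comp_of_integrable hf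

theorem integral_comp_eval_prodMk_eval [NormedSpace ℝ E] {f : α × α → E}
    (hf : Integrable f (μ.prod μ)) {j k : ι} (hjk : j ≠ k) :
    ∫ ω, f (ω j, ω k) ∂(Measure.pi fun _ : ι => μ) = ∫ p, f p ∂(μ.prod μ) := by
  have hmp := measurePreserving_eval_prodMk_eval (μ := fun _ : ι => μ) hjk
  rw [← hmp.map_eq] at hf ⊢
  exact (integral_map hmp.measurable.aemeasurable hf.aestronglyMeasurable).symm

theorem integrable_sum_sum_comp_eval {f : α × α → E} (hf : Integrable f (μ.prod μ))
    (hdiag : ∀ x, f (x, x) = 0) :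
    Integrable (fun ω => ∑ j, ∑ k, f (ω j, ω k)) (Measure.pi fun _ : ι => μ) := by
  classical
  simp_rw [sum_sum_comp_eq_sum_sum_erase hdiag]
  exact integrable_finsetSum _ fun j _ => integrable_finsetSum _ fun k hk =>
    integrable_comp_eval_prodMk_eval hf (ne_of_mem_erase hk).symm

theorem integral_sum_sum_comp_eval [NormedSpace ℝ E] {f : α × α → E}
    (hf : Integrable f (μ.prod μ)) (hdiag : ∀ x, f (x, x) = 0) :
    ∫ ω, ∑ j, ∑ k, f (ω j, ω k) ∂(Measure.pi fun _ : ι => μ) =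
      (Fintype.card ι * (Fintype.card ι - 1)) • ∫ p, f p ∂(μ.prod μ) := by
  classical
  have hint (j : ι) :
      ∀ k ∈ univ.erase j, Integrable (fun ω => f (ω j, ω k)) (Measure.pi fun _ : ι => μ) :=
    fun k hk => integrable_comp_eval_prodMk_eval hf (ne_of_mem_erase hk).symm
  have hval (j : ι) :
      ∀ k ∈ univ.erase j, ∫ ω, f (ω j, ω k) ∂(Measure.pi fun _ : ι => μ) = ∫ p, f p ∂(μ.prod μ) :=
    fun k hk => integral_comp_eval_prodMk_eval hf (ne_of_mem_erase hk).symm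
  simp_rw [sum_sum_comp_eq_sum_sum_erase hdiag]
  rw [integral_finsetSum _ fun j _ => integrable_finsetSum _ (hint j)]
  simp_rw [fun j => integral_finsetSum _ (hint j), fun j => sum_congr rfl (hval j)]
  simp [mul_smul]

end IIDCoordinates

end MeasureTheory

instance isProbabilityMeasure_volume_restrict_Icc_zero_one :
    IsProbabilityMeasure (volume.restrict (Icc (0 : ℝ) 1)) :=
  ⟨by simp⟩

theorem integrableOn_log_Icc_zero_one : IntegrableOn log (Icc 0 1) :=
  (intervalIntegrable_iff_integrableOn_Icc_of_le zero_le_one).1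
    intervalIntegral.intervalIntegrable_log'

theorem integral_Icc_zero_one_eq_intervalIntegral (f : ℝ → ℝ) :
    ∫ x in Icc 0 1, f x = ∫ x in (0 : ℝ)..1, f x := by
  rw [integral_Icc_eq_integral_Ioc, intervalIntegral.integral_of_le zero_le_one]

theorem integral_id_Icc_zero_one : ∫ x in Icc (0 : ℝ) 1, x = 1 / 2 := by
  rw [integral_Icc_zero_one_eq_intervalIntegral]
  norm_num

theorem integral_log_Icc_zero_one : ∫ x in Icc (0 : ℝ) 1, log x = -1 := by
  rw [integral_Icc_zero_one_eq_intervalIntegral]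
  simp

theorem integral_mul_log_Icc_zero_one : ∫ x in Icc (0 : ℝ) 1, x * log x = -1 / 4 := by
  have hderiv : ∀ x ∈ Ioo (0 : ℝ) 1,
      HasDerivAt (fun y => y * (y * log y) / 2 - y ^ 2 / 4) (x * log x) x := by
    intro x hx
    refine ((((hasDerivAt_id' x).mul ((hasDerivAt_id' x).mul (hasDerivAt_log hx.1.ne'))).div_const
      2).sub ((hasDerivAt_pow 2 x).div_const 4)).congr_deriv ?_
    have hx0 : x ≠ 0 := hx.1.ne'
    simp only [Pi.mul_apply]
    field_simp
    ring
  -- written with `y * log y` so that continuity at `0` comes from `continuous_mul_log`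
  have hcont : ContinuousOn (fun y : ℝ => y * (y * log y) / 2 - y ^ 2 / 4) (Icc 0 1) := by
    have := continuous_mul_log
    fun_prop
  rw [integral_Icc_zero_one_eq_intervalIntegral,
    intervalIntegral.integral_eq_sub_of_hasDerivAt_of_le zero_le_one hcont hderiv
      (continuous_mul_log.intervalIntegrable 0 1)]
  norm_num

theorem integrableOn_two_mul_sub_log_div_Icc_zero_one (c : ℝ) :
    IntegrableOn (fun x => 2 * x - log x / c) (Icc 0 1) :=
  ((continuous_const_mul 2).integrableOn_Icc).sub (integrableOn_log_Icc_zero_one.div_const c)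

theorem integral_two_mul_sub_log_div_Icc_zero_one (c : ℝ) :
    ∫ x in Icc (0 : ℝ) 1, (2 * x - log x / c) = 1 + 1 / c := by
  rw [integral_sub ((continuous_const_mul 2).integrableOn_Icc)
      (integrableOn_log_Icc_zero_one.div_const c),
    integral_const_mul, integral_div, integral_id_Icc_zero_one, integral_log_Icc_zero_one]
  ring

noncomputable def logIfGt (p : ℝ × ℝ) : ℝ := if p.2 < p.1 then log p.1 else 0

theorem logIfGt_self (x : ℝ) : logIfGt (x, x) = 0 := by simp [logIfGt]

theorem integrable_logIfGt_Icc_zero_one :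
    Integrable logIfGt ((volume.restrict (Icc (0 : ℝ) 1)).prod (volume.restrict (Icc 0 1))) := by
  refine (integrableOn_log_Icc_zero_one.comp_fst _).mono ?_ (ae_of_all _ fun p => ?_)
  · exact (Measurable.ite (measurableSet_lt measurable_snd measurable_fst)
      (measurable_log.comp measurable_fst) measurable_const).aestronglyMeasurable
  · unfold logIfGt
    split_ifs <;> simp

theorem integral_logIfGt_Icc_zero_one :
    ∫ p, logIfGt p ∂((volume.restrict (Icc (0 : ℝ) 1)).prod (volume.restrict (Icc 0 1))) =
      -1 / 4 := by
  have hinner : ∀ x ∈ Icc (0 : ℝ) 1, ∫ y in Icc (0 : ℝ) 1, logIfGt (x, y) = x * log x := by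
    intro x hx
    have hind : (fun y => logIfGt (x, y)) = (Iio x).indicator (fun _ => log x) := by
      ext y
      simp [logIfGt, indicator_apply]
    have hIio : Iio x ∩ Icc 0 1 = Ico 0 x := by
      ext y
      simp only [mem_inter_iff, Set.mem_Iio, Set.mem_Icc, Set.mem_Ico]
      grind
    rw [hind, integral_indicator_const _ measurableSet_Iio,
      measureReal_restrict_apply measurableSet_Iio, hIio, volume_real_Ico_of_le hx.1, sub_zero,
      smul_eq_mul]
  rw [integral_prod _ integrable_logIfGt_Icc_zero_one,
    setIntegral_congr_fun measurableSet_Icc hinner, integral_mul_log_Icc_zero_one]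

theorem sum_sort_eq_sum_sub_sum_sum_logIfGt {n : ℕ} {ω : Fin n → ℝ} (hω : Function.Injective ω) :
    ∑ i : Fin n, (2 * ω (Tuple.sort ω i) - ((2 * (i : ℕ) + 1) / n) * log (ω (Tuple.sort ω i))) =
      ∑ j, (2 * ω j - log (ω j) / n) - 2 / n * ∑ j, ∑ k, logIfGt (ω j, ω k) := by
  rw [Tuple.sum_apply_sort_eq_sum_rank hω (fun r x => 2 * x - ((2 * (r : ℝ) + 1) / n) * log x),
    mul_sum, ← sum_sub_distrib]
  refine sum_congr rfl fun j _ => ?_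
  simp only [logIfGt, sum_ite, sum_const_zero, add_zero, sum_const, nsmul_eq_mul]
  ring

/-- For stress parameter `a = 1`, the expected value of the lower-tail weighted
mean square error equals `1/2`:
`E[-3n/2 + ∑ᵢ (2 U₍ᵢ₎ - ((2i-1)/n) ln U₍ᵢ₎)] = 1/2`, where `U₍₁₎ ≤ … ≤ U₍ₙ₎` are
the order statistics of `n` i.i.d. uniform random variables on `[0,1]`. -/
theorem risk_function_a_one (n : ℕ) (hn : 0 < n) :
    ∫ ω : Fin n → ℝ,
        (-(3 * (n : ℝ)) / 2 +
          ∑ i : Fin n,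
            (2 * ω (Tuple.sort ω i) -
              ((2 * (i : ℕ) + 1) / n) * Real.log (ω (Tuple.sort ω i))))
      ∂(Measure.pi fun _ : Fin n => volume.restrict (Set.Icc (0 : ℝ) 1))
      = 1 / 2 := by
  have hint := integrableOn_two_mul_sub_log_div_Icc_zero_one (n : ℝ)
  have hsum₁ := integrable_sum_comp_eval (ι := Fin n) hint
  have hsum₂ := integrable_sum_sum_comp_eval (ι := Fin n) integrable_logIfGt_Icc_zero_one
    logIfGt_self
  calc _ = ∫ ω : Fin n → ℝ, (-(3 * (n : ℝ)) / 2 + (∑ j, (2 * ω j - log (ω j) / n) -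
        2 / n * ∑ j, ∑ k, logIfGt (ω j, ω k))) ∂(Measure.pi fun _ => volume.restrict (Icc 0 1)) :=
        integral_congr_ae <| ae_injective_pi.mono fun ω hω => by
          rw [sum_sort_eq_sum_sub_sum_sum_logIfGt hω]
    _ = -(3 * (n : ℝ)) / 2 + (n * (1 + 1 / n) - 2 / n * ((n * (n - 1) : ℕ) * (-1 / 4))) := by
        rw [integral_add (integrable_const _) ?_, integral_const,
          integral_sub hsum₁ (hsum₂.const_mul _), integral_const_mul, integral_sum_comp_eval hint,
          integral_sum_sum_comp_eval integrable_logIfGt_Icc_zero_one logIfGt_self,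
          integral_two_mul_sub_log_div_Icc_zero_one,
          integral_logIfGt_Icc_zero_one]
        · simp only [probReal_univ, one_smul, Fintype.card_fin, nsmul_eq_mul]
        · exact hsum₁.sub (hsum₂.const_mul _)
    _ = 1 / 2 := by
        rw [Nat.cast_mul, Nat.cast_sub hn]
        field_simp
        ring
end
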